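/- After inserting an edge (u,v) into G with core(v) ≤ core(u), if the set V' of nodes whose core number changes is nonempty, then v ∈ V' and the subgraph of the new graph induced by V' is connected. -/
import Mathlib
set_option linter.unusedSectionVars false
set_option linter.unusedVariables false
set_option maxHeartbeats 1000000

variable {V : Type*} [Fintype V]
open scoped Classical

/-- The k-core of `G`, as the set of vertices contained in some subgraph
(vertex set) in which every vertex has at least `k` neighbors inside the set. -/
def coreSet (G : SimpleGraph V) (k : ℕ) : Set V :=
  {v | ∃ S : Set V, v ∈ S ∧ ∀ u ∈ S, k ≤ (S ∩ G.neighborSet u).ncard}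

/-- The core number of `v`: the largest `k` such that `v` belongs to the `k`-core. -/
noncomputable def coreNumber (G : SimpleGraph V) (v : V) : ℕ :=
  sSup {k | v ∈ coreSet G k}

lemma coreSet_anti (G : SimpleGraph V) {j k : ℕ} (h : j ≤ k) : coreSet G k ⊆ coreSet G j := by
  rintro v ⟨S, hvS, hS⟩
  exact ⟨S, hvS, fun u hu => h.trans (hS u hu)⟩

lemma core_bddAbove (G : SimpleGraph V) (v : V) : BddAbove {k | v ∈ coreSet G k} := by
  refine ⟨Fintype.card V, ?_⟩
  rintro k ⟨S, hvS, hS⟩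
  calc k ≤ (S ∩ G.neighborSet v).ncard := hS v hvS
    _ ≤ (Set.univ : Set V).ncard := Set.ncard_le_ncard (Set.subset_univ _) Set.finite_univ
    _ = Fintype.card V := by simp [Set.ncard_univ]

lemma le_coreNumber_iff {G : SimpleGraph V} {v : V} {k : ℕ} :
    k ≤ coreNumber G v ↔ v ∈ coreSet G k := by
  constructor
  · intro h
    have hmem : coreNumber G v ∈ {k | v ∈ coreSet G k} := by
      have h0 : v ∈ coreSet G 0 := ⟨{v}, Set.mem_singleton v, fun _ _ => Nat.zero_le _⟩
      exact Nat.sSup_mem ⟨0, h0⟩ (core_bddAbove G v)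
    exact coreSet_anti G h hmem
  · intro h
    exact le_csSup (core_bddAbove G v) h

lemma coreSet_mono {G H : SimpleGraph V} (h : G ≤ H) (k : ℕ) : coreSet G k ⊆ coreSet H k := by
  rintro v ⟨S, hvS, hS⟩
  refine ⟨S, hvS, fun x hx => (hS x hx).trans (Set.ncard_le_ncard ?_ (Set.toFinite _))⟩
  exact Set.inter_subset_inter_right _ (fun y hy => h hy)

lemma coreSet_prop {G : SimpleGraph V} {k : ℕ} :
    ∀ x ∈ coreSet G k, k ≤ (coreSet G k ∩ G.neighborSet x).ncard := by
  rintro x ⟨S, hxS, hS⟩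
  have hsub : S ⊆ coreSet G k := fun y hy => ⟨S, hy, hS⟩
  calc k ≤ (S ∩ G.neighborSet x).ncard := hS x hxS
    _ ≤ _ := Set.ncard_le_ncard (Set.inter_subset_inter_left _ hsub) (Set.toFinite _)

lemma coreNumber_mono {G H : SimpleGraph V} (h : G ≤ H) (v : V) :
    coreNumber G v ≤ coreNumber H v :=
  le_coreNumber_iff.mpr (coreSet_mono h _ (le_coreNumber_iff.mp le_rfl))

lemma adj_sup_iff {G : SimpleGraph V} {u v a b : V} (huv : u ≠ v) :
    (G ⊔ SimpleGraph.fromEdgeSet {s(u, v)}).Adj a b ↔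
      G.Adj a b ∨ (a = u ∧ b = v) ∨ (a = v ∧ b = u) := by
  simp only [SimpleGraph.sup_adj, SimpleGraph.fromEdgeSet_adj, Set.mem_singleton_iff,
    Sym2.eq, Sym2.rel_iff', Prod.mk.injEq, Prod.swap_prod_mk]
  constructor
  · rintro (h | ⟨(⟨rfl, rfl⟩ | ⟨rfl, rfl⟩), hne⟩)
    · exact Or.inl h
    · exact Or.inr (Or.inl ⟨rfl, rfl⟩)
    · exact Or.inr (Or.inr ⟨rfl, rfl⟩)
  · rintro (h | ⟨rfl, rfl⟩ | ⟨rfl, rfl⟩)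
    · exact Or.inl h
    · exact Or.inr ⟨Or.inl ⟨rfl, rfl⟩, huv⟩
    · exact Or.inr ⟨Or.inr ⟨rfl, rfl⟩, huv.symm⟩

/-- Dropping the extra edge costs at most one neighbor per vertex. -/
lemma witness_drop {G : SimpleGraph V} {u v : V} (huv : u ≠ v) {S : Set V} {m : ℕ}
    (hS : ∀ x ∈ S, m ≤ (S ∩ (G ⊔ SimpleGraph.fromEdgeSet {s(u, v)}).neighborSet x).ncard) :
    ∀ x ∈ S, x ∈ coreSet G (m - 1) := by
  intro x hx
  refine ⟨S, hx, fun y hy => ?_⟩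
  have h1 : S ∩ (G ⊔ SimpleGraph.fromEdgeSet {s(u, v)}).neighborSet y ⊆
      insert (if y = u then v else u) (S ∩ G.neighborSet y) := by
    intro z hz
    rw [Set.mem_inter_iff, SimpleGraph.mem_neighborSet, adj_sup_iff huv] at hz
    rcases hz with ⟨hzS, h | ⟨rfl, rfl⟩ | ⟨rfl, rfl⟩⟩
    · exact Set.mem_insert_of_mem _ ⟨hzS, h⟩
    · simp
    · simp [if_neg huv.symm]
  have := (hS y hy).trans ((Set.ncard_le_ncard h1 (Set.toFinite _)).trans
    (Set.ncard_insert_le _ _))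
  omega

/-- If `v ∉ S`, the new edge is invisible to `S`. -/
lemma witness_no_v {G : SimpleGraph V} {u v : V} (huv : u ≠ v) {S : Set V} {m : ℕ}
    (hS : ∀ x ∈ S, m ≤ (S ∩ (G ⊔ SimpleGraph.fromEdgeSet {s(u, v)}).neighborSet x).ncard)
    (hv : v ∉ S) :
    ∀ x ∈ S, x ∈ coreSet G m := by
  intro x hx
  refine ⟨S, hx, fun y hy => (hS y hy).trans (le_of_eq ?_)⟩
  congr 1
  ext z
  simp only [Set.mem_inter_iff, SimpleGraph.mem_neighborSet, adj_sup_iff huv]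
  constructor
  · rintro ⟨hzS, h | ⟨rfl, rfl⟩ | ⟨rfl, rfl⟩⟩
    · exact ⟨hzS, h⟩
    · exact absurd hzS hv
    · exact absurd hy hv
  · rintro ⟨hzS, h⟩
    exact ⟨hzS, Or.inl h⟩

/-- If `u` and `v` are both in the `m`-core of `G`, any witness in the new graph
can be repaired by taking a union with the `m`-core. -/
lemma witness_union {G : SimpleGraph V} {u v : V} (huv : u ≠ v) {S : Set V} {m : ℕ}
    (hS : ∀ x ∈ S, m ≤ (S ∩ (G ⊔ SimpleGraph.fromEdgeSet {s(u, v)}).neighborSet x).ncard)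
    (hu : u ∈ coreSet G m) (hv : v ∈ coreSet G m) :
    ∀ x ∈ S, x ∈ coreSet G m := by
  set B := coreSet G m with hB
  set T := S ∪ B with hT
  have key : ∀ x ∈ T, m ≤ (T ∩ G.neighborSet x).ncard := by
    intro x hx
    by_cases hxB : x ∈ B
    · calc m ≤ (B ∩ G.neighborSet x).ncard := coreSet_prop x hxB
        _ ≤ _ := Set.ncard_le_ncard
          (Set.inter_subset_inter_left _ Set.subset_union_right) (Set.toFinite _)
    · have hxS : x ∈ S := hx.resolve_right hxB
      have hxu : x ≠ u := fun h => hxB (h ▸ hu)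
      have hxv : x ≠ v := fun h => hxB (h ▸ hv)
      refine (hS x hxS).trans (Set.ncard_le_ncard ?_ (Set.toFinite _))
      intro z hz
      rw [Set.mem_inter_iff, SimpleGraph.mem_neighborSet, adj_sup_iff huv] at hz
      rcases hz with ⟨hzS, h | ⟨h1, h2⟩ | ⟨h1, h2⟩⟩
      · exact ⟨Or.inl hzS, h⟩
      · exact absurd h1 hxu
      · exact absurd h1 hxv
  intro x hx
  exact ⟨T, Or.inl hx, key⟩

theorem stmt7 (G : SimpleGraph V) (u v : V) (huv : u ≠ v) (hnadj : ¬ G.Adj u v)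
    (hle : coreNumber G v ≤ coreNumber G u)
    (V' : Set V)
    (hV' : V' = {w | coreNumber (G ⊔ SimpleGraph.fromEdgeSet {s(u, v)}) w ≠ coreNumber G w})
    (hne : V'.Nonempty) :
    v ∈ V' ∧ ((G ⊔ SimpleGraph.fromEdgeSet {s(u, v)}).induce V').Connected := by
  set G' := G ⊔ SimpleGraph.fromEdgeSet {s(u, v)} with hG'
  have hGle : G ≤ G' := le_sup_left
  set k := coreNumber G v with hk
  -- rewrite G' with swapped sym2, for the `u ∉ S` argument
  have hswap : G' = G ⊔ SimpleGraph.fromEdgeSet {s(v, u)} := by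
    rw [hG', Sym2.eq_swap]
  -- for every w in V', a detailed analysis
  have main : ∀ w ∈ V', coreNumber G w = k ∧ coreNumber G' w = k + 1 ∧
      ∃ S : Set V, w ∈ S ∧ v ∈ S ∧
        (∀ x ∈ S, coreNumber G' w ≤ (S ∩ G'.neighborSet x).ncard) := by
    intro w hw
    rw [hV'] at hw
    have hlt : coreNumber G w < coreNumber G' w :=
      lt_of_le_of_ne (coreNumber_mono hGle w) (Ne.symm hw)
    set m := coreNumber G' w with hm
    obtain ⟨S, hwS, hS⟩ : w ∈ coreSet G' m := le_coreNumber_iff.mp le_rfl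
    have hvS : v ∈ S := by
      by_contra hv
      exact absurd (le_coreNumber_iff.mpr (witness_no_v huv hS hv w hwS)) (not_le.mpr hlt)
    have huS : u ∈ S := by
      by_contra hu
      have hS' : ∀ x ∈ S,
          m ≤ (S ∩ (G ⊔ SimpleGraph.fromEdgeSet {s(v, u)}).neighborSet x).ncard := by
        rw [← hswap]; exact hS
      exact absurd (le_coreNumber_iff.mpr (witness_no_v huv.symm hS' hu w hwS))
        (not_le.mpr hlt)
    -- drop : every member of S is in coreSet G (m-1)
    have hdrop := witness_drop huv hS
    have hcw : m - 1 ≤ coreNumber G w := le_coreNumber_iff.mpr (hdrop w hwS)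
    have hcv : m - 1 ≤ k := le_coreNumber_iff.mpr (hdrop v hvS)
    have hmw : m = coreNumber G w + 1 := by omega
    -- lower bound on coreNumber G w
    have hgek : k ≤ coreNumber G w := by
      by_contra hlt2
      push_neg at hlt2
      have hmk : m ≤ k := by omega
      have hvB : v ∈ coreSet G m := le_coreNumber_iff.mp hmk
      have huB : u ∈ coreSet G m := le_coreNumber_iff.mp (hmk.trans hle)
      have := le_coreNumber_iff.mpr (witness_union huv hS huB hvB w hwS)
      omega
    have hcwk : coreNumber G w = k := le_antisymm (by omega) hgek
    exact ⟨hcwk, by omega, S, hwS, hvS, fun x hx => hS x hx⟩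
  -- v ∈ V'
  have hvV' : v ∈ V' := by
    obtain ⟨w, hw⟩ := hne
    obtain ⟨hcw, hcw', S, hwS, hvS, hS⟩ := main w hw
    have : k + 1 ≤ coreNumber G' v := by
      refine le_coreNumber_iff.mpr ⟨S, hvS, fun x hx => ?_⟩
      have := hS x hx; omega
    rw [hV']
    simp only [Set.mem_setOf_eq]
    omega
  refine ⟨hvV', ?_⟩
  -- connectivity
  set Big := coreSet G' (k + 1) with hBig
  have hV'Big : V' ⊆ Big := by
    intro w hw
    obtain ⟨_, hcw', _⟩ := main w hw
    exact le_coreNumber_iff.mp (le_of_eq hcw'.symm)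
  set D := {x | ∃ hx : x ∈ V', (G'.induce V').Reachable ⟨v, hvV'⟩ ⟨x, hx⟩} with hD
  have hvD : v ∈ D := ⟨hvV', SimpleGraph.Reachable.refl _⟩
  have hDV' : D ⊆ V' := fun x hx => hx.1
  have hadj_ind : ∀ (a b : V) (ha : a ∈ V') (hb : b ∈ V'), G'.Adj a b →
      (G'.induce V').Adj ⟨a, ha⟩ ⟨b, hb⟩ := by
    intro a b ha hb h
    exact h
  have hstep : ∀ (a b : V) (ha : a ∈ V'), a ∈ D → G'.Adj a b → (hb : b ∈ V') → b ∈ D := by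
    rintro a b ha ⟨ha', hra⟩ hadj hb
    exact ⟨hb, hra.trans (SimpleGraph.Adj.reachable (hadj_ind a b ha hb hadj))⟩
  -- u ∈ D whenever u ∈ V'
  have huvadj : G'.Adj v u := by
    rw [hG', adj_sup_iff huv]
    exact Or.inr (Or.inr ⟨rfl, rfl⟩)
  -- the key claim : every element of V' is in D
  have hall : ∀ x ∈ V', x ∈ D := by
    by_contra hcon
    push_neg at hcon
    obtain ⟨x₀, hx₀V, hx₀D⟩ := hcon
    set W := Big \ D with hW
    have hkey : ∀ x ∈ W, k + 1 ≤ (W ∩ G.neighborSet x).ncard := by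
      rintro x ⟨hxBig, hxD⟩
      by_cases hxV : x ∈ V'
      · -- x ∈ V' \ D : x ≠ u, x ≠ v, no neighbors in D
        have hxv : x ≠ v := fun h => hxD (h ▸ hvD)
        have hxu : x ≠ u := by
          intro h
          refine hxD (hstep v x hvV' hvD ?_ hxV)
          rw [h]; exact huvadj
        have h1 : k + 1 ≤ (Big ∩ G'.neighborSet x).ncard := coreSet_prop x hxBig
        refine h1.trans (Set.ncard_le_ncard ?_ (Set.toFinite _))
        rintro z ⟨hzBig, hz⟩
        rw [SimpleGraph.mem_neighborSet, hG', adj_sup_iff huv] at hz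
        have hzG : G.Adj x z := by
          rcases hz with h | ⟨h1, h2⟩ | ⟨h1, h2⟩
          · exact h
          · exact absurd h1 hxu
          · exact absurd h1 hxv
        have hzD : z ∉ D := by
          intro hzD
          by_cases hzV : z ∈ V'
          · exact hxD (hstep z x hzV hzD (hGle hzG).symm hxV)
          · exact hzV (hDV' hzD)
        exact ⟨⟨hzBig, hzD⟩, hzG⟩
      · -- x ∉ V' : core number already ≥ k+1 in G
        have hxV2 : ¬ coreNumber G' x ≠ coreNumber G x := by
          rw [hV'] at hxV; exact hxV
        have hxc : coreNumber G' x = coreNumber G x := not_ne_iff.mp hxV2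
        have hxc' : k + 1 ≤ coreNumber G x := by
          rw [← hxc]
          exact le_coreNumber_iff.mpr hxBig
        have hxB : x ∈ coreSet G (k + 1) := le_coreNumber_iff.mp hxc'
        have hBsub : coreSet G (k + 1) ⊆ W := by
          intro y hy
          refine ⟨coreSet_mono hGle _ hy, fun hyD => ?_⟩
          obtain ⟨hcy, _, _⟩ := main y (hDV' hyD)
          have : k + 1 ≤ coreNumber G y := le_coreNumber_iff.mpr hy
          omega
        calc k + 1 ≤ (coreSet G (k + 1) ∩ G.neighborSet x).ncard := coreSet_prop x hxB
          _ ≤ _ := Set.ncard_le_ncard (Set.inter_subset_inter_left _ hBsub) (Set.toFinite _)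
    have hx₀W : x₀ ∈ W := ⟨hV'Big hx₀V, hx₀D⟩
    have : k + 1 ≤ coreNumber G x₀ := le_coreNumber_iff.mpr ⟨W, hx₀W, hkey⟩
    obtain ⟨hcx₀, _, _⟩ := main x₀ hx₀V
    omega
  rw [SimpleGraph.connected_iff]
  constructor
  · rintro ⟨a, ha⟩ ⟨b, hb⟩
    obtain ⟨ha', hra⟩ := hall a ha
    obtain ⟨hb', hrb⟩ := hall b hb
    exact hra.symm.trans hrb
  · exact ⟨⟨v, hvV'⟩⟩
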